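/- The sorting action of the symmetric group S(r) on r-tuples of transpositions (defined by sending the Coxeter generator (i i+1) to R_i) is a well-defined group action, i.e., the assignment π ↦ R_π is a group homomorphism from S(r) to the permutations of the set of r-tuples of transpositions with a fixed product. -/

import Mathlib

/-!
The operator `R_i` applies the pair map `sortPair` to the steps in positions `i, i + 1`.
`sortPair` is involutive, keeps the product of the two transpositions, and satisfies the
Yang–Baxter equation: the last fact is a check over the orderings of the three colours, using
only that conjugating a transposition by a smaller-colour one keeps its colour. So the `R_i`
are permutations of `Walk_r(ρ, σ)` satisfying the Coxeter relations of type `A_{r-1}`.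

The Coxeter presentation of `S(r)` then gives the homomorphism. It is proved by induction on
`r`: each `π ∈ S(m + 1)` factors as `c_k * π'` with `k = π 0`, `c_k = (k-1 k) ⋯ (0 1)` and
`π'` fixing `0`. Sending this to `s_{k-1} ⋯ s_0 * Φ(π')` extends the homomorphism `Φ` from the
stabiliser of `0`. Multiplicativity reduces to `F((i i+1) π) = s_i F(π)`, checked by comparing
`i + 1` with `k`: each case is one Coxeter relation.
-/

/-- A transposition step `(s t)` of `S(d)` recorded with `s < t`; its colour is `t`. -/
def Step (d : ℕ) : Type := {p : Fin d × Fin d // p.1 < p.2}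

/-- The permutation (transposition) corresponding to a step. -/
def stepPerm {d : ℕ} (x : Step d) : Equiv.Perm (Fin d) := Equiv.swap x.1.1 x.1.2

/-- The colour of a step, i.e. the larger of the two interchanged points. -/
def colour {d : ℕ} (x : Step d) : Fin d := x.1.2

/-- The product of a tuple of steps, taken in order. -/
def stepProd {d r : ℕ} (W : Fin r → Step d) : Equiv.Perm (Fin d) :=
  (List.ofFn fun j => stepPerm (W j)).prod

/-- Conjugation of the step `x` by the step `c`, recorded again as a step. -/
def conjStep {d : ℕ} (c x : Step d) : Step d :=
  if h : stepPerm c x.1.1 < stepPerm c x.1.2 then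
    ⟨(stepPerm c x.1.1, stepPerm c x.1.2), h⟩
  else
    ⟨(stepPerm c x.1.2, stepPerm c x.1.1),
      lt_of_le_of_ne (not_lt.mp h)
        (fun he => absurd ((stepPerm c).injective he) (ne_of_gt x.2))⟩

/-- The sorting operator `R_i`: swap steps `i` and `i+1`, conjugating the step of
larger colour by the step of smaller colour; do nothing if the colours agree. -/
def Rop {d r : ℕ} (i : ℕ) (h : i + 1 < r) (W : Fin r → Step d) : Fin r → Step d :=
  let i0 : Fin r := ⟨i, Nat.lt_of_succ_lt h⟩
  let i1 : Fin r := ⟨i + 1, h⟩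
  let a := W i0
  let b := W i1
  if colour a < colour b then
    Function.update (Function.update W i0 (conjStep a b)) i1 a
  else if colour b < colour a then
    Function.update (Function.update W i0 b) i1 (conjStep b a)
  else W

/-- The set of `r`-step walks on the transposition Cayley graph of `S(d)` from
`ρ` to `σ`, encoded as tuples of steps with `ρ * (product of steps) = σ`. -/
def Walk (d r : ℕ) (ρ σ : Equiv.Perm (Fin d)) : Type :=
  {W : Fin r → Step d // ρ * stepProd W = σ}

/-- The spectrum of a walk: the sequence of colours of its steps. -/
def spec {d r : ℕ} {ρ σ : Equiv.Perm (Fin d)} (W : Walk d r ρ σ) : Fin r → Fin d :=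
  fun j => colour (W.val j)

section Step

variable {d : ℕ}

theorem stepPerm_injective : Function.Injective (stepPerm (d := d)) := by
  rintro ⟨⟨a, b⟩, hab⟩ ⟨⟨c, e⟩, hce⟩ h
  dsimp only at hab hce
  have ha := congrArg (· a) h
  have hc := congrArg (· c) h
  simp only [stepPerm, Equiv.swap_apply_left, Equiv.swap_apply_def] at ha hc
  congr 1
  ext <;> dsimp only <;> split_ifs at ha hc <;> omega

theorem val_conjStep (c x : Step d) :
    (conjStep c x).1 = if stepPerm c x.1.1 < stepPerm c x.1.2
      then (stepPerm c x.1.1, stepPerm c x.1.2) else (stepPerm c x.1.2, stepPerm c x.1.1) := by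
  unfold conjStep
  exact apply_dite Subtype.val _ _ _

theorem colour_conjStep_of_lt {c x : Step d} (h : colour c < colour x) :
    colour (conjStep c x) = colour x := by
  have hc : c.1.1 < c.1.2 := c.2
  have hx : x.1.1 < x.1.2 := x.2
  simp only [colour] at h ⊢
  have hfix : stepPerm c x.1.2 = x.1.2 := Equiv.swap_apply_of_ne_of_ne (by omega) (by omega)
  have hlt : stepPerm c x.1.1 < stepPerm c x.1.2 := by
    rw [hfix, stepPerm, Equiv.swap_apply_def]
    split_ifs <;> omega
  rw [val_conjStep, if_pos hlt, hfix]

theorem stepPerm_mul_self (c : Step d) : stepPerm c * stepPerm c = 1 :=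
  Equiv.swap_mul_self _ _

theorem stepPerm_mul_self_mul (c : Step d) (g : Equiv.Perm (Fin d)) :
    stepPerm c * (stepPerm c * g) = g :=
  Equiv.swap_mul_self_mul _ _ _

theorem stepPerm_conjStep (c x : Step d) :
    stepPerm (conjStep c x) = stepPerm c * stepPerm x * stepPerm c := by
  have hconj : stepPerm c * stepPerm x * stepPerm c
      = Equiv.swap (stepPerm c x.1.1) (stepPerm c x.1.2) := by
    simp only [stepPerm]
    rw [Equiv.swap_apply_apply, Equiv.swap_inv]
  rw [hconj, stepPerm, val_conjStep]
  split_ifs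
  · rfl
  · exact Equiv.swap_comm _ _

theorem conjStep_conjStep (c x : Step d) : conjStep c (conjStep c x) = x :=
  stepPerm_injective <| by
    simp [stepPerm_conjStep, mul_assoc, stepPerm_mul_self, stepPerm_mul_self_mul]

theorem conjStep_conjStep_left (a b c : Step d) :
    conjStep (conjStep a b) c = conjStep a (conjStep b (conjStep a c)) :=
  stepPerm_injective <| by simp [stepPerm_conjStep, mul_assoc]

end Step

section UpdatePair

variable {α : Type*} {r : ℕ}

def updatePair (T : α → α → α × α) (i : ℕ) (h : i + 1 < r) (W : Fin r → α) : Fin r → α :=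
  let p := T (W ⟨i, by omega⟩) (W ⟨i + 1, h⟩)
  Function.update (Function.update W ⟨i, by omega⟩ p.1) ⟨i + 1, h⟩ p.2

theorem updatePair_apply (T : α → α → α × α) {i : ℕ} (h : i + 1 < r) (W : Fin r → α)
    (j : Fin r) :
    updatePair T i h W j =
      if j.val = i then (T (W ⟨i, by omega⟩) (W ⟨i + 1, h⟩)).1
      else if j.val = i + 1 then (T (W ⟨i, by omega⟩) (W ⟨i + 1, h⟩)).2
      else W j := by
  simp only [updatePair, Function.update_apply, Fin.ext_iff]
  split_ifs <;> first | rfl | omega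

theorem updatePair_updatePair {T : α → α → α × α}
    (hT : ∀ a b, T (T a b).1 (T a b).2 = (a, b)) {i : ℕ} (h : i + 1 < r) (W : Fin r → α) :
    updatePair T i h (updatePair T i h W) = W := by
  funext j
  simp only [updatePair_apply, if_true, Nat.succ_ne_self, if_false, hT]
  split_ifs with h0 h1
  · exact congrArg W (Fin.ext h0.symm)
  · exact congrArg W (Fin.ext h1.symm)
  · rfl

theorem updatePair_comm {T T' : α → α → α × α} {i j : ℕ} (hij : i + 1 < j) (hi : i + 1 < r)
    (hj : j + 1 < r) (W : Fin r → α) :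
    updatePair T i hi (updatePair T' j hj W) = updatePair T' j hj (updatePair T i hi W) := by
  funext k
  simp only [updatePair_apply]
  split_ifs <;> first | omega | rfl

/-- The braid relation `T₁₂ T₂₃ T₁₂ = T₂₃ T₁₂ T₂₃` on triples, written out componentwise. -/
def IsYangBaxter (T : α → α → α × α) : Prop :=
  ∀ a b c,
    ((T (T a b).1 (T (T a b).2 c).1).1, (T (T a b).1 (T (T a b).2 c).1).2, (T (T a b).2 c).2) =
    ((T a (T b c).1).1, (T (T a (T b c).1).2 (T b c).2).1, (T (T a (T b c).1).2 (T b c).2).2)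

theorem updatePair_braid {T : α → α → α × α} (hT : IsYangBaxter T) {i : ℕ} (h : i + 2 < r)
    (W : Fin r → α) :
    updatePair T i (by omega) (updatePair T (i + 1) h (updatePair T i (by omega) W)) =
      updatePair T (i + 1) h (updatePair T i (by omega) (updatePair T (i + 1) h W)) := by
  have hW := hT (W ⟨i, by omega⟩) (W ⟨i + 1, by omega⟩) (W ⟨i + 1 + 1, h⟩)
  simp only [Prod.mk.injEq] at hW
  have hne : i ≠ i + 1 + 1 := by omega
  funext ⟨k, hk⟩
  obtain rfl | rfl | rfl | ⟨h0, h1, h2⟩ :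
      k = i ∨ k = i + 1 ∨ k = i + 2 ∨ (k ≠ i ∧ k ≠ i + 1 ∧ k ≠ i + 2) := by omega
  · simpa [updatePair_apply, hne, hne.symm] using hW.1
  · simpa [updatePair_apply, hne, hne.symm] using hW.2.1
  · simpa [updatePair_apply, hne, hne.symm] using hW.2.2
  · simp [updatePair_apply, h0, h1, h2]

theorem prod_ofFn_updatePair {M : Type*} [Monoid M] (f : α → M) {T : α → α → α × α}
    (hT : ∀ a b, f (T a b).1 * f (T a b).2 = f a * f b) {i : ℕ} (h : i + 1 < r)
    (W : Fin r → α) :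
    (List.ofFn fun j => f (updatePair T i h W j)).prod = (List.ofFn fun j => f (W j)).prod := by
  obtain ⟨q, rfl⟩ : ∃ q, r = i + 2 + q := ⟨r - (i + 2), by omega⟩
  have split (F : Fin (i + 2 + q) → M) : (List.ofFn F).prod =
      (List.ofFn fun j : Fin i => F ⟨j, by omega⟩).prod * (F ⟨i, by omega⟩ * F ⟨i + 1, h⟩) *
        (List.ofFn fun j : Fin q => F ⟨i + 2 + j, by omega⟩).prod := by
    simp only [List.ofFn_add (n := i + 2) (m := q), List.ofFn_add (n := i) (m := 2),
      List.ofFn_succ, List.ofFn_zero, List.prod_append, List.prod_cons, List.prod_nil, mul_one]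
    rfl
  have hoff (j : Fin (i + 2 + q)) (h0 : j.val ≠ i) (h1 : j.val ≠ i + 1) :
      updatePair T i h W j = W j := by
    rw [updatePair_apply, if_neg h0, if_neg h1]
  rw [split, split, updatePair_apply, updatePair_apply, if_pos rfl,
    if_neg (show ¬i + 1 = i by omega), if_pos rfl, hT]
  congr 4 <;> funext j <;> rw [hoff _ (by simp; omega) (by simp; omega)]

end UpdatePair

section SortPair

variable {d : ℕ}

def sortPair (a b : Step d) : Step d × Step d :=
  if colour a < colour b then (conjStep a b, a)
  else if colour b < colour a then (b, conjStep b a)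
  else (a, b)

theorem sortPair_of_lt {a b : Step d} (h : colour a < colour b) :
    sortPair a b = (conjStep a b, a) :=
  if_pos h

theorem sortPair_of_gt {a b : Step d} (h : colour b < colour a) :
    sortPair a b = (b, conjStep b a) := by
  rw [sortPair, if_neg h.not_gt, if_pos h]

theorem sortPair_of_eq {a b : Step d} (h : colour a = colour b) :
    sortPair a b = (a, b) := by
  rw [sortPair, if_neg h.not_lt, if_neg h.symm.not_lt]

theorem sortPair_sortPair (a b : Step d) :
    sortPair (sortPair a b).1 (sortPair a b).2 = (a, b) := by
  rcases lt_trichotomy (colour a) (colour b) with hab | hab | hab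
  · rw [sortPair_of_lt hab, sortPair_of_gt (by rwa [colour_conjStep_of_lt hab]),
      conjStep_conjStep]
  · rw [sortPair_of_eq hab, sortPair_of_eq hab]
  · rw [sortPair_of_gt hab, sortPair_of_lt (by rwa [colour_conjStep_of_lt hab]),
      conjStep_conjStep]

theorem stepPerm_mul_stepPerm_sortPair (a b : Step d) :
    stepPerm (sortPair a b).1 * stepPerm (sortPair a b).2 = stepPerm a * stepPerm b := by
  rcases lt_trichotomy (colour a) (colour b) with hab | hab | hab
  · simp [sortPair_of_lt hab, stepPerm_conjStep, mul_assoc, stepPerm_mul_self]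
  · rw [sortPair_of_eq hab]
  · simp [sortPair_of_gt hab, stepPerm_conjStep, mul_assoc, stepPerm_mul_self_mul]

theorem sortPair_isYangBaxter : IsYangBaxter (sortPair (d := d)) := by
  intro a b c
  -- Nested conjugations are normalised by `conjStep_conjStep_left`, so a colour side condition
  -- may need `colour_conjStep_of_lt` several levels deep: hence the discharge depth.
  rcases lt_trichotomy (colour a) (colour b) with hab | hab | hab <;>
  rcases lt_trichotomy (colour b) (colour c) with hbc | hbc | hbc <;>
  rcases lt_trichotomy (colour a) (colour c) with hac | hac | hac <;>
  first
  | (exfalso; omega)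
  | simp (maxDischargeDepth := 4) [sortPair_of_lt, sortPair_of_gt, sortPair_of_eq,
      colour_conjStep_of_lt, conjStep_conjStep, conjStep_conjStep_left, *]

theorem Rop_eq_updatePair {r : ℕ} (i : ℕ) (h : i + 1 < r) (W : Fin r → Step d) :
    Rop i h W = updatePair sortPair i h W := by
  rcases lt_trichotomy (colour (W ⟨i, by omega⟩)) (colour (W ⟨i + 1, h⟩)) with hc | hc | hc
  · simp only [Rop, updatePair, sortPair_of_lt hc, if_pos hc]
  · simp only [Rop, updatePair, sortPair_of_eq hc, hc, lt_irrefl, if_false,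
      Function.update_eq_self]
  · simp only [Rop, updatePair, sortPair_of_gt hc, if_pos hc, if_neg hc.not_gt]

theorem stepProd_Rop {r : ℕ} (i : ℕ) (h : i + 1 < r) (W : Fin r → Step d) :
    stepProd (Rop i h W) = stepProd W := by
  rw [Rop_eq_updatePair]
  exact prod_ofFn_updatePair stepPerm stepPerm_mul_stepPerm_sortPair h W

theorem Rop_Rop {r : ℕ} (i : ℕ) (h : i + 1 < r) (W : Fin r → Step d) : Rop i h (Rop i h W) = W := by
  simp only [Rop_eq_updatePair]
  exact updatePair_updatePair sortPair_sortPair h W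

end SortPair

section CoxeterPresentation

open Equiv

variable {G : Type*} [Group G]

/-- `s i` stands for the image of the adjacent transposition `(i i+1)` of `Fin n`; indices with
`i + 1 ≥ n` are unconstrained. -/
structure IsCoxeterFamily (n : ℕ) (s : ℕ → G) : Prop where
  mul_self : ∀ i, i + 1 < n → s i * s i = 1
  braid : ∀ i, i + 2 < n → s i * s (i + 1) * s i = s (i + 1) * s i * s (i + 1)
  comm : ∀ i j, i + 1 < j → j + 1 < n → s i * s j = s j * s i

def descWord (s : ℕ → G) : ℕ → G
  | 0 => 1
  | k + 1 => s k * descWord s k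

namespace IsCoxeterFamily

variable {n : ℕ} {s : ℕ → G}

theorem shift (hs : IsCoxeterFamily (n + 1) s) : IsCoxeterFamily n (fun i => s (i + 1)) where
  mul_self i hi := hs.mul_self (i + 1) (by omega)
  braid i hi := hs.braid (i + 1) (by omega)
  comm i j hij hj := hs.comm (i + 1) (j + 1) (by omega) (by omega)

theorem mul_descWord_of_lt (hs : IsCoxeterFamily n s) {j k : ℕ} (hkj : k < j)
    (hj : j + 1 < n) : s j * descWord s k = descWord s k * s j := by
  induction k with
  | zero => simp [descWord]
  | succ k ih =>
    rw [descWord, ← mul_assoc, ← hs.comm k j hkj hj, mul_assoc, ih (by omega), mul_assoc]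

theorem mul_descWord_of_succ_lt (hs : IsCoxeterFamily n s) {i k : ℕ} (hik : i + 1 < k)
    (hk : k < n) : s i * descWord s k = descWord s k * s (i + 1) := by
  induction k, hik using Nat.le_induction with
  | base =>
    calc s i * descWord s (i + 2) = s i * s (i + 1) * s i * descWord s i := by
          simp only [descWord, mul_assoc]
      _ = s (i + 1) * s i * (s (i + 1) * descWord s i) := by
          rw [hs.braid i hk, mul_assoc]
      _ = descWord s (i + 2) * s (i + 1) := by
          rw [hs.mul_descWord_of_lt (Nat.lt_succ_self i) (by omega)]
          simp only [descWord, mul_assoc]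
  | succ k hik ih =>
    rw [descWord, ← mul_assoc, hs.comm i k hik (by omega), mul_assoc, ih (by omega), mul_assoc]

end IsCoxeterFamily

theorem swap_braid {α : Type*} [DecidableEq α] {a b c : α} (hab : a ≠ b) (hac : a ≠ c)
    (hbc : b ≠ c) : swap a b * swap b c * swap a b = swap b c * swap a b * swap b c := by
  rw [swap_mul_swap_mul_swap hab hac, swap_comm a b, swap_comm b c,
    swap_mul_swap_mul_swap hbc.symm hac.symm, swap_comm]

def adjSwap (n i : ℕ) : Perm (Fin n) :=
  if h : i + 1 < n then swap ⟨i, by omega⟩ ⟨i + 1, h⟩ else 1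

theorem adjSwap_of_lt {n i : ℕ} (h : i + 1 < n) :
    adjSwap n i = swap ⟨i, by omega⟩ ⟨i + 1, h⟩ :=
  dif_pos h

theorem isCoxeterFamily_adjSwap (n : ℕ) : IsCoxeterFamily n (adjSwap n) where
  mul_self i hi := by rw [adjSwap_of_lt hi, swap_mul_self]
  braid i hi := by
    rw [adjSwap_of_lt (by omega), adjSwap_of_lt (by omega)]
    exact swap_braid (by simp) (by simp; omega) (by simp)
  comm i j hij hj := by
    rw [adjSwap_of_lt (by omega), adjSwap_of_lt hj]
    exact (Perm.disjoint_swap_swap (by simp [Fin.ext_iff]; omega)).commute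

variable {m : ℕ}

theorem descWord_adjSwap_apply_zero {k : ℕ} (hk : k < m + 1) :
    descWord (adjSwap (m + 1)) k 0 = ⟨k, hk⟩ := by
  induction k with
  | zero => rfl
  | succ k ih => rw [descWord, Perm.mul_apply, ih (by omega), adjSwap_of_lt hk, swap_apply_left]

def extendZero (ρ : Perm (Fin m)) : Perm (Fin (m + 1)) :=
  Perm.decomposeFin.symm (0, ρ)

@[simp]
theorem extendZero_apply_zero (ρ : Perm (Fin m)) : extendZero ρ 0 = 0 :=
  Perm.decomposeFin_symm_apply_zero _ _

@[simp]
theorem extendZero_apply_succ (ρ : Perm (Fin m)) (j : Fin m) :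
    extendZero ρ j.succ = (ρ j).succ := by
  simp [extendZero]

theorem extendZero_one : extendZero (1 : Perm (Fin m)) = 1 := by
  ext x
  cases x using Fin.cases <;> simp

theorem extendZero_mul (ρ τ : Perm (Fin m)) :
    extendZero (ρ * τ) = extendZero ρ * extendZero τ := by
  ext x
  cases x using Fin.cases <;> simp

theorem extendZero_adjSwap (i : ℕ) : extendZero (adjSwap m i) = adjSwap (m + 1) (i + 1) := by
  by_cases hi : i + 1 < m
  · rw [adjSwap_of_lt hi, adjSwap_of_lt (by omega)]
    ext x
    cases x using Fin.cases with
    | zero => simp [swap_apply_def]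
    | succ j => simp [swap_apply_def, Fin.ext_iff, apply_ite Fin.succ]
  · rw [adjSwap, dif_neg hi, adjSwap, dif_neg (by omega), extendZero_one]

theorem exists_eq_descWord_adjSwap_mul_extendZero (π : Perm (Fin (m + 1))) :
    ∃ k < m + 1, ∃ ρ, π = descWord (adjSwap (m + 1)) k * extendZero ρ := by
  set c := descWord (adjSwap (m + 1)) (π 0)
  set σ := c⁻¹ * π
  have hσ : (Perm.decomposeFin σ).1 = 0 := by
    have h := Perm.decomposeFin_symm_apply_zero (Perm.decomposeFin σ).1 (Perm.decomposeFin σ).2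
    rw [Prod.mk.eta, Equiv.symm_apply_apply, Perm.mul_apply, Perm.inv_eq_iff_eq] at h
    exact c.injective (h.symm.trans (descWord_adjSwap_apply_zero (π 0).isLt).symm)
  refine ⟨π 0, (π 0).isLt, (Perm.decomposeFin σ).2, ?_⟩
  calc π = c * σ := (mul_inv_cancel_left c π).symm
    _ = c * extendZero (Perm.decomposeFin σ).2 := by
      rw [extendZero, ← hσ, Prod.mk.eta, Equiv.symm_apply_apply]

/-- Extends `Φ : S(m) → G` to `S(m + 1)` along the factorisation
`π = descWord (adjSwap (m + 1)) k * extendZero ρ` with `k = π 0`, as `descWord s k * Φ ρ`;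
`decomposeFin` recovers `ρ`. -/
def liftSucc (s : ℕ → G) (Φ : Perm (Fin m) →* G) (π : Perm (Fin (m + 1))) : G :=
  descWord s (π 0) * Φ (Perm.decomposeFin ((descWord (adjSwap (m + 1)) (π 0))⁻¹ * π)).2

variable {s : ℕ → G} {Φ : Perm (Fin m) →* G}

theorem liftSucc_descWord_mul_extendZero {k : ℕ} (hk : k < m + 1) (ρ : Perm (Fin m)) :
    liftSucc s Φ (descWord (adjSwap (m + 1)) k * extendZero ρ) = descWord s k * Φ ρ := by
  have h0 : (descWord (adjSwap (m + 1)) k * extendZero ρ) 0 = ⟨k, hk⟩ := by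
    rw [Perm.mul_apply, extendZero_apply_zero, descWord_adjSwap_apply_zero]
  rw [liftSucc, h0, inv_mul_cancel_left, extendZero, Equiv.apply_symm_apply]

theorem liftSucc_one : liftSucc s Φ 1 = 1 := by
  have h := liftSucc_descWord_mul_extendZero (s := s) (Φ := Φ) (Nat.succ_pos m) 1
  simpa only [descWord, extendZero_one, mul_one, map_one] using h

theorem liftSucc_adjSwap_mul (hs : IsCoxeterFamily (m + 1) s)
    (hΦ : ∀ i, i + 1 < m → Φ (adjSwap m i) = s (i + 1)) {i : ℕ} (hi : i + 1 < m + 1)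
    (π : Perm (Fin (m + 1))) :
    liftSucc s Φ (adjSwap (m + 1) i * π) = s i * liftSucc s Φ π := by
  obtain ⟨k, hk, ρ, rfl⟩ := exists_eq_descWord_adjSwap_mul_extendZero π
  have ht := isCoxeterFamily_adjSwap (m + 1)
  set t := adjSwap (m + 1)
  rw [liftSucc_descWord_mul_extendZero hk]
  obtain hik | rfl | rfl | hki : i + 1 < k ∨ i + 1 = k ∨ i = k ∨ k < i := by omega
  · have e : t i * (descWord t k * extendZero ρ) =
        descWord t k * extendZero (adjSwap m i * ρ) := by
      rw [← mul_assoc, ht.mul_descWord_of_succ_lt hik hk, extendZero_mul, extendZero_adjSwap,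
        mul_assoc]
    rw [e, liftSucc_descWord_mul_extendZero hk, map_mul, hΦ i (by omega), ← mul_assoc,
      ← mul_assoc, hs.mul_descWord_of_succ_lt hik hk]
  · have e : t i * (descWord t (i + 1) * extendZero ρ) = descWord t i * extendZero ρ := by
      rw [descWord, ← mul_assoc, ← mul_assoc, ht.mul_self i hi, one_mul]
    rw [e, liftSucc_descWord_mul_extendZero (by omega), descWord, ← mul_assoc, ← mul_assoc,
      hs.mul_self i hi, one_mul]
  · rw [← mul_assoc, ← descWord, liftSucc_descWord_mul_extendZero hi, descWord, mul_assoc]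
  · obtain ⟨j, rfl⟩ : ∃ j, i = j + 1 := ⟨i - 1, by omega⟩
    have e : t (j + 1) * (descWord t k * extendZero ρ) =
        descWord t k * extendZero (adjSwap m j * ρ) := by
      rw [← mul_assoc, ht.mul_descWord_of_lt hki hi, extendZero_mul, extendZero_adjSwap,
        mul_assoc]
    rw [e, liftSucc_descWord_mul_extendZero hk, map_mul, hΦ j (by omega), ← mul_assoc,
      ← mul_assoc, hs.mul_descWord_of_lt hki hi]

theorem map_mul_of_map_adjSwap_mul {F : Perm (Fin (m + 1)) → G} (h1 : F 1 = 1)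
    (hF : ∀ i, i + 1 < m + 1 → ∀ π, F (adjSwap (m + 1) i * π) = s i * F π)
    (π σ : Perm (Fin (m + 1))) :
    F (π * σ) = F π * F σ := by
  have hπ : π ∈ Submonoid.closure (Set.range fun i : Fin m => swap i.castSucc i.succ) := by
    rw [Perm.mclosure_swap_castSucc_succ]
    exact Submonoid.mem_top π
  induction hπ using Submonoid.closure_induction generalizing σ with
  | mem _ hx =>
    obtain ⟨i, rfl⟩ := hx
    have hi : (i : ℕ) + 1 < m + 1 := by omega
    have e : swap i.castSucc i.succ = adjSwap (m + 1) i := by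
      rw [adjSwap_of_lt hi]
      rfl
    dsimp only
    rw [e, hF i hi, ← mul_one (adjSwap (m + 1) i), hF i hi, h1, mul_one]
  | one => rw [one_mul, h1, one_mul]
  | mul x y _ _ hx hy => rw [mul_assoc, hx, hy, hx, mul_assoc]

theorem IsCoxeterFamily.exists_monoidHom {n : ℕ} (hs : IsCoxeterFamily n s) :
    ∃ Φ : Perm (Fin n) →* G, ∀ i, i + 1 < n → Φ (adjSwap n i) = s i := by
  induction n generalizing s with
  | zero => exact ⟨1, fun i hi => by omega⟩
  | succ m ih =>
    obtain ⟨Φ, hΦ⟩ := ih hs.shift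
    refine ⟨MonoidHom.mk' (liftSucc s Φ)
      (map_mul_of_map_adjSwap_mul liftSucc_one fun i hi => liftSucc_adjSwap_mul hs hΦ hi), ?_⟩
    intro i hi
    simpa [liftSucc_one] using liftSucc_adjSwap_mul hs hΦ hi 1

end CoxeterPresentation

namespace Walk

variable {d r : ℕ} {ρ σ : Equiv.Perm (Fin d)}

def sortPerm (i : ℕ) : Equiv.Perm (Walk d r ρ σ) :=
  if h : i + 1 < r then
    Function.Involutive.toPerm (fun W => ⟨Rop i h W.val, by rw [stepProd_Rop]; exact W.2⟩)
      fun W => Subtype.ext (Rop_Rop i h W.val)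
  else 1

theorem sortPerm_apply_val {i : ℕ} (h : i + 1 < r) (W : Walk d r ρ σ) :
    (sortPerm i W).val = Rop i h W.val := by
  rw [sortPerm, dif_pos h]
  rfl

theorem isCoxeterFamily_sortPerm :
    IsCoxeterFamily r (sortPerm (d := d) (r := r) (ρ := ρ) (σ := σ)) where
  mul_self i hi := Equiv.ext fun W => Subtype.ext <| by
    simp only [Equiv.Perm.mul_apply, sortPerm_apply_val hi, Rop_Rop, Equiv.Perm.one_apply]
  braid i hi := Equiv.ext fun W => Subtype.ext <| by
    simp only [Equiv.Perm.mul_apply, sortPerm_apply_val hi,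
      sortPerm_apply_val (show i + 1 < r by omega), Rop_eq_updatePair]
    exact updatePair_braid sortPair_isYangBaxter hi W.val
  comm i j hij hj := Equiv.ext fun W => Subtype.ext <| by
    simp only [Equiv.Perm.mul_apply, sortPerm_apply_val hj,
      sortPerm_apply_val (show i + 1 < r by omega), Rop_eq_updatePair]
    exact updatePair_comm hij _ hj W.val

end Walk

/-- The sorting action is a well-defined action of `S(r)` on `Walk_r(ρ,σ)`:
there is a group homomorphism `S(r) → Aut(Walk_r(ρ,σ))` sending each Coxeter
generator `(i i+1)` to the operator `R_i`. -/
theorem stmt6 (d r : ℕ) (ρ σ : Equiv.Perm (Fin d)) :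
    ∃ R : Equiv.Perm (Fin r) →* Equiv.Perm (Walk d r ρ σ),
      ∀ (i : ℕ) (h : i + 1 < r) (W : Walk d r ρ σ),
        (R (Equiv.swap (⟨i, Nat.lt_of_succ_lt h⟩ : Fin r) (⟨i + 1, h⟩ : Fin r)) W).val
          = Rop i h W.val := by
  obtain ⟨R, hR⟩ := Walk.isCoxeterFamily_sortPerm.exists_monoidHom
  refine ⟨R, fun i h W => ?_⟩
  rw [← adjSwap_of_lt h, hR i h, Walk.sortPerm_apply_val h]
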